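/- arXiv:1401.0721 — 8 statements merged into one kernel-verified Lean document; each statement's English description precedes it below -/
import Mathlib

section
/- Let q : ℤ² → ℤ be defined by q(v₁, v₂) = v₁² + v₂² - n·v₁·v₂ for an integer n ≥ 2. Define a sequence (aᵢ) by a₀ = 0, a₁ = 1, aᵢ₊₁ = n·aᵢ - aᵢ₋₁. Then the set of vectors v ∈ ℤ≥0² with q(v) = 1 equals {(aᵢ, aᵢ₊₁) : i ≥ 0} ∪ {(aᵢ₊₁, aᵢ) : i ≥ 0}. -/
/-!
Vieta jumping. The step `(x, y) ↦ (y, n y - x)` of the recurrence preserves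
`q(x, y) = x² + y² - n x y`, so every pair `(a i, a (i + 1))` has value `q(0, 1) = 1`, and for
`n ≥ 2` the sequence is nonnegative and nondecreasing. Conversely, a solution `0 < x ≤ y` of
`q = 1` satisfies `y (n x - y) = x² - 1`, so `(n x - y, x)` is a solution with
`0 ≤ n x - y < x`; descending this way ends at `(0, 1) = (a 0, a 1)`.
-/

def kroneckerForm (n x y : ℤ) : ℤ := x ^ 2 + y ^ 2 - n * x * y

theorem kroneckerForm_comm (n x y : ℤ) : kroneckerForm n y x = kroneckerForm n x y := by
  unfold kroneckerForm; ring

theorem kroneckerForm_reflect (n x y : ℤ) : kroneckerForm n y (n * y - x) = kroneckerForm n x y := by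
  unfold kroneckerForm; ring

section Recurrence

variable {n : ℤ} {a : ℕ → ℤ}

theorem kroneckerForm_recurrence (ha0 : a 0 = 0) (ha1 : a 1 = 1)
    (harec : ∀ i : ℕ, a (i + 2) = n * a (i + 1) - a i) (i : ℕ) :
    kroneckerForm n (a i) (a (i + 1)) = 1 := by
  induction i with
  | zero => simp [kroneckerForm, ha0, ha1]
  | succ k ih => rwa [harec, kroneckerForm_reflect]

theorem recurrence_nonneg_and_le_succ (hn : 2 ≤ n) (ha0 : a 0 = 0) (ha1 : a 1 = 1)
    (harec : ∀ i : ℕ, a (i + 2) = n * a (i + 1) - a i) (i : ℕ) :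
    0 ≤ a i ∧ a i ≤ a (i + 1) := by
  induction i with
  | zero => simp [ha0, ha1]
  | succ k ih =>
    obtain ⟨hk, hk_le⟩ := ih
    refine ⟨hk.trans hk_le, ?_⟩
    rw [harec k]
    nlinarith

theorem exists_eq_recurrence_of_kroneckerForm_eq_one (ha0 : a 0 = 0) (ha1 : a 1 = 1)
    (harec : ∀ i : ℕ, a (i + 2) = n * a (i + 1) - a i) {x y : ℤ} (hx : 0 ≤ x) (hxy : x ≤ y)
    (hq : kroneckerForm n x y = 1) : ∃ i, x = a i ∧ y = a (i + 1) := by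
  induction hm : x.toNat using Nat.strong_induction_on generalizing x y with
  | _ m ih =>
    unfold kroneckerForm at hq
    rcases hx.eq_or_lt with rfl | hx_pos
    · have hy : y = 1 := by nlinarith
      exact ⟨0, by simp [ha0, ha1, hy]⟩
    · have hprod : y * (n * x - y) = x ^ 2 - 1 := by linarith
      have hy'_nonneg : 0 ≤ n * x - y := by nlinarith
      have hy'_lt : n * x - y < x := by nlinarith
      have hq' : kroneckerForm n (n * x - y) x = 1 := by unfold kroneckerForm; linarith
      obtain ⟨i, hi, hi_succ⟩ := ih _ (by omega) hy'_nonneg hy'_lt.le hq' rfl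
      exact ⟨i + 1, hi_succ, by rw [harec, ← hi, ← hi_succ]; ring⟩

end Recurrence

/-- The positive vectors of `q`-value 1 for the Tits form of the `n`-Kronecker quiver
are exactly the dimension vectors of preprojective and preinjective indecomposables. -/
theorem stmt_0 (n : ℤ) (hn : 2 ≤ n) (a : ℕ → ℤ)
    (ha0 : a 0 = 0) (ha1 : a 1 = 1)
    (harec : ∀ i : ℕ, a (i + 2) = n * a (i + 1) - a i) :
    {v : ℤ × ℤ | 0 ≤ v.1 ∧ 0 ≤ v.2 ∧ v.1 ^ 2 + v.2 ^ 2 - n * v.1 * v.2 = 1} =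
      {v : ℤ × ℤ | ∃ i : ℕ, v = (a i, a (i + 1))} ∪
        {v : ℤ × ℤ | ∃ i : ℕ, v = (a (i + 1), a i)} := by
  ext ⟨x, y⟩
  simp only [Set.mem_ofPred_eq, Set.mem_union, Prod.mk.injEq]
  change _ ∧ _ ∧ kroneckerForm n x y = 1 ↔ _
  constructor
  · rintro ⟨hx, hy, hq⟩
    rcases le_total x y with hxy | hyx
    · exact .inl (exists_eq_recurrence_of_kroneckerForm_eq_one ha0 ha1 harec hx hxy hq)
    · rw [← kroneckerForm_comm] at hq
      obtain ⟨i, hy_eq, hx_eq⟩ := exists_eq_recurrence_of_kroneckerForm_eq_one ha0 ha1 harec hy hyx hq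
      exact .inr ⟨i, hx_eq, hy_eq⟩
  · have hq := kroneckerForm_recurrence ha0 ha1 harec
    have hmono := recurrence_nonneg_and_le_succ hn ha0 ha1 harec
    rintro (⟨i, rfl, rfl⟩ | ⟨i, rfl, rfl⟩)
    · exact ⟨(hmono i).1, (hmono i).1.trans (hmono i).2, hq i⟩
    · exact ⟨(hmono i).1.trans (hmono i).2, (hmono i).1, by rw [kroneckerForm_comm]; exact hq i⟩
end

section
/- Let v = (v₁, v₂) ∈ ℤ≥0² with v₁ ≤ v₂, v₂ ≥ 2, n ≥ 2, and v₁² + v₂² - n·v₁·v₂ = 1. Set w = (n·v₁ - v₂, v₁). Then w ∈ ℤ≥0², w₁ ≤ w₂, w₂ < v₂, and w₁² + w₂² - n·w₁·w₂ = 1. -/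
/-!
The map `(a, b) ↦ (n a - b, a)` preserves `q(a, b) = a² + b² - n a b`, and by Vieta
`b (n a - b) = a² - q(a, b)`. For a root `q(v) = 1` with `v₂ ≥ 2` one has `0 < v₁ < v₂`, so
`v₂ (n v₁ - v₂) = v₁² - 1` lies in `[0, v₁ v₂)`, which pins `n v₁ - v₂` in `[0, v₁)`.
-/

section KroneckerForm

variable {R : Type*} [CommRing R]

theorem kroneckerForm_reflect_s2 (n a b : R) :
    (n * a - b) ^ 2 + a ^ 2 - n * (n * a - b) * a = a ^ 2 + b ^ 2 - n * a * b := by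
  ring

theorem mul_reflect_eq_of_kroneckerForm_eq {n a b c : R} (hq : a ^ 2 + b ^ 2 - n * a * b = c) :
    b * (n * a - b) = a ^ 2 - c := by
  linear_combination -hq

variable [LinearOrder R] [IsStrictOrderedRing R]

theorem pos_of_kroneckerForm_eq_one {n a b : R} (ha : 0 ≤ a) (hb : 2 ≤ b)
    (hq : a ^ 2 + b ^ 2 - n * a * b = 1) : 0 < a := by
  refine lt_of_le_of_ne ha fun h => ?_
  subst h
  nlinarith

theorem lt_of_kroneckerForm_eq_one {n a b : R} (hn : 2 ≤ n) (hab : a ≤ b)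
    (hq : a ^ 2 + b ^ 2 - n * a * b = 1) : a < b := by
  refine lt_of_le_of_ne hab fun h => ?_
  subst h
  nlinarith [mul_nonneg (sub_nonneg.2 hn) (sq_nonneg a)]

end KroneckerForm

theorem stmt_2_general (n v₁ v₂ : ℤ) (hn : 2 ≤ n) (h₁ : 0 ≤ v₁)
    (hle : v₁ ≤ v₂) (h2le : 2 ≤ v₂)
    (hq : v₁ ^ 2 + v₂ ^ 2 - n * v₁ * v₂ = 1) :
    0 ≤ n * v₁ - v₂ ∧ 0 ≤ v₁ ∧ n * v₁ - v₂ ≤ v₁ ∧ v₁ < v₂ ∧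
      (n * v₁ - v₂) ^ 2 + v₁ ^ 2 - n * (n * v₁ - v₂) * v₁ = 1 := by
  have hv₁ : 0 < v₁ := pos_of_kroneckerForm_eq_one h₁ h2le hq
  have hlt : v₁ < v₂ := lt_of_kroneckerForm_eq_one hn hle hq
  have hprod : v₂ * (n * v₁ - v₂) = v₁ ^ 2 - 1 := mul_reflect_eq_of_kroneckerForm_eq hq
  have hv₂ : 0 < v₂ := hv₁.trans hlt
  refine ⟨?_, h₁, ?_, hlt, (kroneckerForm_reflect_s2 n v₁ v₂).trans hq⟩
  · exact (mul_nonneg_iff_of_pos_left hv₂).1 (by rw [hprod]; nlinarith)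
  · refine le_of_lt ((mul_lt_mul_iff_right₀ hv₂).1 ?_)
    rw [hprod]
    nlinarith

/-- Descent step for positive roots of the Tits form of the `n`-Kronecker quiver. -/
theorem stmt_2 (n v₁ v₂ : ℤ) (hn : 2 ≤ n) (h₁ : 0 ≤ v₁) (h₂ : 0 ≤ v₂)
    (hle : v₁ ≤ v₂) (h2le : 2 ≤ v₂)
    (hq : v₁ ^ 2 + v₂ ^ 2 - n * v₁ * v₂ = 1) :
    0 ≤ n * v₁ - v₂ ∧ 0 ≤ v₁ ∧ n * v₁ - v₂ ≤ v₁ ∧ v₁ < v₂ ∧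
      (n * v₁ - v₂) ^ 2 + v₁ ^ 2 - n * (n * v₁ - v₂) * v₁ = 1 :=
  stmt_2_general n v₁ v₂ hn h₁ hle h2le hq
end

section
/- Let A be a finite-dimensional algebra over a field k and let 0 → M' → M → M'' → 0 be a non-split short exact sequence of finite-dimensional A-modules such that M' and M'' are indecomposable and Hom_A(M', M'') = 0. Then M is indecomposable. -/
/-!
An idempotent `e` of `M` maps `M'` into `M'`, because `g ∘ e ∘ f : M' → M''` vanishes. So `e`
induces idempotents on `M'` and on `M''`, each `0` or `1` by indecomposability. Replacing `e` by
`1 - e` if necessary, `e` vanishes on `M'`. If `e` also induces `0` on `M''`, then `e` maps `M`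
into `M'`, where it vanishes, so `e = e ^ 2 = 0`. If it induces `1` on `M''`, then `e` factors
through `g` as a section of `g`, which the non-splitting excludes.
-/

open LinearMap

section

variable {A M M' M'' : Type*} [Ring A] [AddCommGroup M] [AddCommGroup M'] [AddCommGroup M'']
  [Module A M] [Module A M'] [Module A M'']

theorem LinearMap.exists_comp_eq_of_range_le {f : M' →ₗ[A] M} (hf : Function.Injective f)
    {u : M'' →ₗ[A] M} (h : range u ≤ range f) : ∃ v : M'' →ₗ[A] M', f ∘ₗ v = u :=
  ⟨(LinearEquiv.ofInjective f hf).symm ∘ₗ u.codRestrict (range f) (fun x => h ⟨x, rfl⟩),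
    LinearMap.ext fun x => by simp⟩

theorem LinearMap.exists_comp_eq_of_ker_le {g : M →ₗ[A] M''} (hg : Function.Surjective g)
    {u : M →ₗ[A] M'} (h : ker g ≤ ker u) : ∃ v : M'' →ₗ[A] M', v ∘ₗ g = u := by
  refine ⟨(ker g).liftQ u h ∘ₗ (g.quotKerEquivOfSurjective hg).symm.toLinearMap,
    LinearMap.ext fun x => ?_⟩
  have hx : (g.quotKerEquivOfSurjective hg).symm (g x) = Submodule.Quotient.mk x := by
    rw [LinearEquiv.symm_apply_eq]; rfl
  simp [hx]

theorem IsIdempotentElem.eq_zero_or_eq_one {e : Module.End A M} (he : IsIdempotentElem e)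
    (hM : ∀ N P : Submodule A M, IsCompl N P → N = ⊥ ∨ P = ⊥) : e = 0 ∨ e = 1 := by
  rcases hM _ _ he.isCompl with h | h
  · exact .inl (range_eq_bot.mp h)
  · exact .inr <|
      he.isProj_range.submodule_eq_top_iff.mp (eq_top_of_isCompl_bot (h ▸ he.isCompl))

theorem Submodule.eq_bot_or_eq_bot_of_isCompl_of_isIdempotentElem
    (h : ∀ e : Module.End A M, IsIdempotentElem e → e = 0 ∨ e = 1) {N P : Submodule A M}
    (hNP : IsCompl N P) : N = ⊥ ∨ P = ⊥ := by
  refine (h _ (isIdempotentElem_projection hNP)).imp (fun h0 => ?_) (fun h1 => ?_)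
  · rw [← range_projection hNP, h0, range_zero]
  · rw [← ker_projection hNP, h1, Module.End.one_eq_id, ker_id]

theorem IsIdempotentElem.comp_eq_zero_or_eq_self_of_range_le {e : Module.End A M}
    (he : IsIdempotentElem e) (hM' : ∀ N P : Submodule A M', IsCompl N P → N = ⊥ ∨ P = ⊥)
    {f : M' →ₗ[A] M} (hf : Function.Injective f) (h : range (e ∘ₗ f) ≤ range f) :
    e ∘ₗ f = 0 ∨ e ∘ₗ f = f := by
  obtain ⟨e', he'⟩ := exists_comp_eq_of_range_le hf h
  have he'_idem : IsIdempotentElem e' := by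
    refine (cancel_left hf).mp ?_
    change f ∘ₗ e' ∘ₗ e' = f ∘ₗ e'
    rw [← comp_assoc, he', comp_assoc, he', ← comp_assoc, ← Module.End.mul_eq_comp, he.eq]
  rcases he'_idem.eq_zero_or_eq_one hM' with rfl | rfl
  · exact .inl (by rw [← he', comp_zero])
  · exact .inr (by rw [← he', Module.End.one_eq_id, comp_id])

theorem IsIdempotentElem.comp_eq_zero_or_eq_self_of_ker_le {e : Module.End A M}
    (he : IsIdempotentElem e) (hM'' : ∀ N P : Submodule A M'', IsCompl N P → N = ⊥ ∨ P = ⊥)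
    {g : M →ₗ[A] M''} (hg : Function.Surjective g) (h : ker g ≤ ker (g ∘ₗ e)) :
    g ∘ₗ e = 0 ∨ g ∘ₗ e = g := by
  obtain ⟨e'', he''⟩ := exists_comp_eq_of_ker_le hg h
  have he''_idem : IsIdempotentElem e'' := by
    refine (cancel_right hg).mp ?_
    change (e'' ∘ₗ e'') ∘ₗ g = e'' ∘ₗ g
    rw [comp_assoc, he'', ← comp_assoc, he'', comp_assoc, ← Module.End.mul_eq_comp, he.eq]
  rcases he''_idem.eq_zero_or_eq_one hM'' with rfl | rfl
  · exact .inl (by rw [← he'', zero_comp])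
  · exact .inr (by rw [← he'', Module.End.one_eq_id, id_comp])

theorem exists_section_of_comp_eq_zero_of_comp_eq_self {f : M' →ₗ[A] M} {g : M →ₗ[A] M''}
    (hg : Function.Surjective g) (hexact : range f = ker g) {u : Module.End A M}
    (huf : u ∘ₗ f = 0) (hgu : g ∘ₗ u = g) : ∃ s : M'' →ₗ[A] M, g ∘ₗ s = LinearMap.id := by
  obtain ⟨s, hs⟩ := exists_comp_eq_of_ker_le hg (hexact ▸ range_le_ker_iff.mpr huf)
  refine ⟨s, (cancel_right hg).mp ?_⟩
  rw [comp_assoc, hs, hgu, id_comp]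

theorem IsIdempotentElem.eq_zero_of_comp_eq_zero {f : M' →ₗ[A] M} {g : M →ₗ[A] M''}
    (hexact : range f = ker g) {u : Module.End A M} (hu : IsIdempotentElem u)
    (huf : u ∘ₗ f = 0) (hgu : g ∘ₗ u = 0) : u = 0 := by
  ext x
  obtain ⟨y, hy⟩ : u x ∈ range f := hexact ▸ congr($hgu x)
  rw [LinearMap.zero_apply, ← hu.eq, Module.End.mul_apply, ← hy, ← comp_apply, huf,
    LinearMap.zero_apply]

theorem IsIdempotentElem.eq_zero_or_exists_section {f : M' →ₗ[A] M} {g : M →ₗ[A] M''}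
    (hg : Function.Surjective g) (hexact : range f = ker g) {u : Module.End A M}
    (hu : IsIdempotentElem u) (huf : u ∘ₗ f = 0) (hgu : g ∘ₗ u = 0 ∨ g ∘ₗ u = g) :
    u = 0 ∨ ∃ s : M'' →ₗ[A] M, g ∘ₗ s = LinearMap.id :=
  hgu.imp (hu.eq_zero_of_comp_eq_zero hexact huf)
    (exists_section_of_comp_eq_zero_of_comp_eq_self hg hexact huf)

theorem IsIdempotentElem.eq_zero_or_eq_one_of_exact {f : M' →ₗ[A] M} {g : M →ₗ[A] M''}
    (hf : Function.Injective f) (hg : Function.Surjective g) (hexact : range f = ker g)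
    (hnonsplit : ¬ ∃ s : M'' →ₗ[A] M, g ∘ₗ s = LinearMap.id)
    (hM' : ∀ N P : Submodule A M', IsCompl N P → N = ⊥ ∨ P = ⊥)
    (hM'' : ∀ N P : Submodule A M'', IsCompl N P → N = ⊥ ∨ P = ⊥)
    {e : Module.End A M} (he : IsIdempotentElem e) (hgef : g ∘ₗ e ∘ₗ f = 0) : e = 0 ∨ e = 1 := by
  have hmaps : range (e ∘ₗ f) ≤ range f := hexact ▸ range_le_ker_iff.mpr hgef
  have hker : ker g ≤ ker (g ∘ₗ e) := hexact ▸ range_le_ker_iff.mpr hgef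
  have hge := he.comp_eq_zero_or_eq_self_of_ker_le hM'' hg hker
  rcases he.comp_eq_zero_or_eq_self_of_range_le hM' hf hmaps with hef | hef
  · exact .inl ((he.eq_zero_or_exists_section hg hexact hef hge).resolve_right hnonsplit)
  · -- `e` is the identity on `M'`, so the complementary idempotent `1 - e` kills `M'`.
    have hg1e : g ∘ₗ (1 - e) = 0 ∨ g ∘ₗ (1 - e) = g := by
      rw [comp_sub, Module.End.one_eq_id, comp_id, sub_eq_zero, sub_eq_self]
      exact hge.symm.imp Eq.symm id
    have h1ef : (1 - e) ∘ₗ f = 0 := by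
      rw [sub_comp, hef, Module.End.one_eq_id, id_comp, sub_self]
    have h1e : 1 - e = 0 :=
      (he.one_sub.eq_zero_or_exists_section hg hexact h1ef hg1e).resolve_right hnonsplit
    exact .inr (sub_eq_zero.mp h1e).symm

end

theorem stmt_5_general {A : Type} [Ring A]
    {M' M M'' : Type} [AddCommGroup M'] [AddCommGroup M] [AddCommGroup M'']
    [Module A M'] [Module A M] [Module A M'']
    (f : M' →ₗ[A] M) (g : M →ₗ[A] M'')
    (hf : Function.Injective f) (hg : Function.Surjective g)
    (hexact : LinearMap.range f = LinearMap.ker g)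
    (hnonsplit : ¬ ∃ s : M'' →ₗ[A] M, g.comp s = LinearMap.id)
    (hM'indec : (∃ x : M', x ≠ 0) ∧
      ∀ N P : Submodule A M', IsCompl N P → N = ⊥ ∨ P = ⊥)
    (hM''indec : (∃ x : M'', x ≠ 0) ∧
      ∀ N P : Submodule A M'', IsCompl N P → N = ⊥ ∨ P = ⊥)
    (hhom : ∀ h : M' →ₗ[A] M'', h = 0) :
    (∃ x : M, x ≠ 0) ∧ ∀ N P : Submodule A M, IsCompl N P → N = ⊥ ∨ P = ⊥ := by
  obtain ⟨⟨x, hx⟩, hM'⟩ := hM'indec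
  refine ⟨⟨f x, (map_ne_zero_iff f hf).mpr hx⟩, fun _ _ => ?_⟩
  exact Submodule.eq_bot_or_eq_bot_of_isCompl_of_isIdempotentElem fun e he =>
    he.eq_zero_or_eq_one_of_exact hf hg hexact hnonsplit hM' hM''indec.2 (hhom _)

/-- A non-split extension of an indecomposable `M''` by an indecomposable `M'` with
`Hom_A(M', M'') = 0` is indecomposable. -/
theorem stmt_5 {k A : Type} [Field k] [Ring A] [Algebra k A] [FiniteDimensional k A]
    {M' M M'' : Type} [AddCommGroup M'] [AddCommGroup M] [AddCommGroup M'']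
    [Module k M'] [Module k M] [Module k M'']
    [Module A M'] [Module A M] [Module A M'']
    [IsScalarTower k A M'] [IsScalarTower k A M] [IsScalarTower k A M'']
    [FiniteDimensional k M'] [FiniteDimensional k M] [FiniteDimensional k M'']
    (f : M' →ₗ[A] M) (g : M →ₗ[A] M'')
    (hf : Function.Injective f) (hg : Function.Surjective g)
    (hexact : LinearMap.range f = LinearMap.ker g)
    (hnonsplit : ¬ ∃ s : M'' →ₗ[A] M, g.comp s = LinearMap.id)
    (hM'indec : (∃ x : M', x ≠ 0) ∧
      ∀ N P : Submodule A M', IsCompl N P → N = ⊥ ∨ P = ⊥)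
    (hM''indec : (∃ x : M'', x ≠ 0) ∧
      ∀ N P : Submodule A M'', IsCompl N P → N = ⊥ ∨ P = ⊥)
    (hhom : ∀ h : M' →ₗ[A] M'', h = 0) :
    (∃ x : M, x ≠ 0) ∧ ∀ N P : Submodule A M, IsCompl N P → N = ⊥ ∨ P = ⊥ :=
  stmt_5_general f g hf hg hexact hnonsplit hM'indec hM''indec hhom
end

section
/- Let 𝒜 be an abelian category in which Ext² vanishes (hereditary), let ξ : 0 → X' → X → X'' → 0 be a short exact sequence, and let ε' : X' → Y' be any morphism and ε'' : X'' → Y'' a monomorphism. Then there exists a commutative diagram with exact rows 0 → X' → X → X'' → 0 over 0 → Y' → Y → Y'' → 0 whose vertical maps are ε', some ε : X → Y, and ε''. -/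
/-!
Since `Ext²` vanishes, the long exact `Ext(-, Y')`-sequence of
`0 → X'' → Y'' → coker ε'' → 0` shows that the class of the pushout of `ξ` along `ε'` in
`Ext¹(X'', Y')` is the pullback along `ε''` of some `η ∈ Ext¹(Y'', Y')`. In the derived
category, complete `η` to a distinguished triangle `Y' → M → Y'' → Y'[1]`; the compatibility
of the classes lets one complete `(ε', ε'')` to a morphism from the triangle of `ξ`. Since
`M` is an extension of objects of the heart, applying `H⁰` gives a short exact sequence
`0 → Y' → H⁰(M) → Y'' → 0`, and `H⁰` of the morphism of triangles is the required
diagram.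
-/

open CategoryTheory Limits Pretriangulated

section

universe w v u

variable {C : Type u} [Category.{v} C] [Abelian C]

namespace DerivedCategory

variable [HasDerivedCategory C]

lemma isZero_homologyFunctor_obj_singleFunctor_obj (A : C) {n : ℤ} (hn : n ≠ 0) :
    IsZero ((homologyFunctor C n).obj ((singleFunctor C 0).obj A)) := by
  rcases hn.lt_or_gt with hn | hn
  · exact isZero_of_isGE _ 0 n hn
  · exact isZero_of_isLE _ 0 n hn

lemma singleFunctorCompHomologyFunctorIso_inv_naturality_assoc {A B : C} (φ : A ⟶ B) {Z : C}
    (ψ : (homologyFunctor C 0).obj ((singleFunctor C 0).obj B) ⟶ Z) :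
    φ ≫ (singleFunctorCompHomologyFunctorIso C 0).inv.app B ≫ ψ =
      (singleFunctorCompHomologyFunctorIso C 0).inv.app A ≫
        (homologyFunctor C 0).map ((singleFunctor C 0).map φ) ≫ ψ :=
  (singleFunctorCompHomologyFunctorIso C 0).inv.naturality_assoc φ ψ

lemma shortExact_homologyFunctor_map_of_distTriang {A B : C} {M : DerivedCategory C}
    (u : (singleFunctor C 0).obj A ⟶ M) (q : M ⟶ (singleFunctor C 0).obj B)
    (δ : (singleFunctor C 0).obj B ⟶ ((singleFunctor C 0).obj A)⟦(1 : ℤ)⟧)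
    (hT : Triangle.mk u q δ ∈ distTriang _) :
    (ShortComplex.mk
      ((singleFunctorCompHomologyFunctorIso C 0).inv.app A ≫ (homologyFunctor C 0).map u)
      ((homologyFunctor C 0).map q ≫ (singleFunctorCompHomologyFunctorIso C 0).hom.app B)
      (by rw [Category.assoc, ← Functor.map_comp_assoc,
            show u ≫ q = 0 from comp_distTriang_mor_zero₁₂ _ hT]
          simp)).ShortExact := by
  have hu : Mono ((homologyFunctor C 0).map u) :=
    (HomologySequence.mono_homologyMap_mor₁_iff _ hT (-1) 0).2
      ((isZero_homologyFunctor_obj_singleFunctor_obj B (by norm_num)).eq_of_src _ _)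
  have hq : Epi ((homologyFunctor C 0).map q) :=
    (HomologySequence.epi_homologyMap_mor₂_iff _ hT 0 1).2
      ((isZero_homologyFunctor_obj_singleFunctor_obj A one_ne_zero).eq_of_tgt _ _)
  refine ShortComplex.shortExact_of_iso ?_ (.mk' (HomologySequence.exact₂ _ hT 0) hu hq)
  exact ShortComplex.isoMk ((singleFunctorCompHomologyFunctorIso C 0).app A) (Iso.refl _)
    ((singleFunctorCompHomologyFunctorIso C 0).app B)
    (((singleFunctorCompHomologyFunctorIso C 0).hom_inv_id_app_assoc A _).trans
      (Category.comp_id _).symm) (Category.id_comp _)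

end DerivedCategory

open Abelian DerivedCategory

variable [HasExt.{w} C]

lemma CategoryTheory.Abelian.Ext.exists_mk₀_comp_eq_of_mono {A B : C} (i : A ⟶ B) [Mono i]
    {Y : C} {n : ℕ} [Subsingleton (Ext (cokernel i) Y (n + 1))] (x : Ext A Y n) :
    ∃ y : Ext B Y n, (Ext.mk₀ i).comp y (zero_add n) = x :=
  have hi : (ShortComplex.mk i (cokernel.π i) (cokernel.condition i)).ShortExact :=
    .mk' (ShortComplex.exact_of_g_is_cokernel _ (cokernelIsCokernel i)) ‹_› (coequalizer.π_epi)
  Ext.contravariant_sequence_exact₁ hi _ x (add_comm 1 n) (Subsingleton.elim _ _)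

lemma CategoryTheory.ShortComplex.ShortExact.exists_shortExact_of_extClass_comp_eq
    {S : ShortComplex C} (hS : S.ShortExact) {Y' Y'' : C} (η : Ext Y'' Y' 1)
    (a : S.X₁ ⟶ Y') (c : S.X₃ ⟶ Y'')
    (h : hS.extClass.comp (Ext.mk₀ a) (add_zero 1) = (Ext.mk₀ c).comp η (zero_add 1)) :
    ∃ (Y : C) (g' : Y' ⟶ Y) (g'' : Y ⟶ Y'') (w : g' ≫ g'' = 0) (b : S.X₂ ⟶ Y),
      (ShortComplex.mk g' g'' w).ShortExact ∧ S.f ≫ b = a ≫ g' ∧ b ≫ g'' = S.g ≫ c := by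
  let := HasDerivedCategory.standard C
  obtain ⟨M, u, q, hT⟩ := distinguished_cocone_triangle₂
    (η.hom : (singleFunctor C 0).obj Y'' ⟶ ((singleFunctor C 0).obj Y')⟦(1 : ℤ)⟧)
  have comm : hS.singleδ ≫ ((singleFunctor C 0).map a)⟦(1 : ℤ)⟧' =
      (singleFunctor C 0).map c ≫ η.hom := by
    simpa [hS.extClass_hom, ShiftedHom.comp_mk₀, ShiftedHom.mk₀_comp] using congrArg Ext.hom h
  obtain ⟨b, hb₁, hb₂⟩ := complete_distinguished_triangle_morphism₂ _ _
    hS.singleTriangle_distinguished hT _ _ comm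
  change (singleFunctor C 0).obj S.X₂ ⟶ M at b
  change (singleFunctor C 0).map S.f ≫ b = (singleFunctor C 0).map a ≫ u at hb₁
  change (singleFunctor C 0).map S.g ≫ (singleFunctor C 0).map c = b ≫ q at hb₂
  refine ⟨_, _, _, _,
    (singleFunctorCompHomologyFunctorIso C 0).inv.app S.X₂ ≫
      (DerivedCategory.homologyFunctor C 0).map b,
    shortExact_homologyFunctor_map_of_distTriang u q _ hT, ?_, ?_⟩
  · rw [singleFunctorCompHomologyFunctorIso_inv_naturality_assoc,
      singleFunctorCompHomologyFunctorIso_inv_naturality_assoc,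
      ← Functor.map_comp, ← Functor.map_comp, hb₁]
  · simp only [Category.assoc]
    rw [← Functor.map_comp_assoc, ← hb₂, Functor.map_comp_assoc,
      ← singleFunctorCompHomologyFunctorIso_inv_naturality_assoc,
      ← singleFunctorCompHomologyFunctorIso_inv_naturality_assoc]
    simp

end

/-- In a hereditary abelian category (`Ext² = 0`), any short exact sequence can be mapped
to a short exact sequence along a morphism on the left end and a monomorphism on the right
end. -/
theorem stmt_8 {C : Type u} [Category.{v} C] [Abelian C] [HasExt.{w} C]
    (hereditary : ∀ A B : C, Subsingleton (Abelian.Ext A B 2))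
    {X' X X'' Y' Y'' : C} (f' : X' ⟶ X) (f'' : X ⟶ X'') (w0 : f' ≫ f'' = 0)
    (hses : (ShortComplex.mk f' f'' w0).ShortExact)
    (ε' : X' ⟶ Y') (ε'' : X'' ⟶ Y'') [Mono ε''] :
    ∃ (Y : C) (g' : Y' ⟶ Y) (g'' : Y ⟶ Y'') (w1 : g' ≫ g'' = 0) (ε : X ⟶ Y),
      (ShortComplex.mk g' g'' w1).ShortExact ∧
      f' ≫ ε = ε' ≫ g' ∧ ε ≫ g'' = f'' ≫ ε'' := by
  have := hereditary (cokernel ε'') Y'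
  obtain ⟨η, hη⟩ := Abelian.Ext.exists_mk₀_comp_eq_of_mono ε''
    (hses.extClass.comp (Abelian.Ext.mk₀ ε') (add_zero 1))
  exact hses.exists_shortExact_of_extClass_comp_eq η ε' ε'' hη.symm
end

section
/- An indecomposable representation M of a finite quiver K is such that for every choice of basis 𝓑, the coefficient quiver Γ(M, 𝓑) is connected. Conversely, if Γ(M, 𝓑) is connected for all bases 𝓑, then M is indecomposable. -/
/-!
A family `g` of invertible matrices is a change of basis, and the coefficient quiver in the new
basis is `coeffQuiver` of the conjugated matrices `g (tgt e) * M e * (g (src e))⁻¹`. Up to such a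
change of basis, an idempotent endomorphism is a diagonal `0`/`1` matrix `coordProj S`, keeping the
basis vectors in a set `S`, and `coordProj S` is an endomorphism exactly when no arrow of the
coefficient quiver joins `S` to its complement. Hence a nontrivial idempotent, i.e. a nontrivial
direct sum decomposition, exists iff some coefficient quiver is disconnected.
-/

open Matrix

theorem LinearMap.IsIdempotentElem.exists_basis_toMatrix_eq_diagonal_indicator
    {k V ι : Type*} [Field k] [AddCommGroup V] [Module k V] [Fintype ι] [DecidableEq ι]
    {f : V →ₗ[k] V} (hf : IsIdempotentElem f) (b₀ : Module.Basis ι k V) :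
    ∃ (b : Module.Basis ι k V) (s : Set ι),
      LinearMap.toMatrix b b f = diagonal (s.indicator 1) := by
  have : FiniteDimensional k V := b₀.finiteDimensional_of_finite
  let b' := ((Module.finBasis k (range f)).prod (Module.finBasis k (ker f))).map
    (Submodule.prodEquivOfIsCompl _ _ (LinearMap.IsIdempotentElem.isCompl hf))
  have hb' : ∀ c, f (b' c) = if c.isLeft then b' c else 0 := by
    rintro (c | c)
    · simpa [b'] using (LinearMap.IsIdempotentElem.mem_range_iff hf).1 (Submodule.coe_mem _)
    · simp [b']
  let e : _ ≃ ι := Fintype.equivOfCardEq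
    (by rw [← Module.finrank_eq_card_basis b', Module.finrank_eq_card_basis b₀])
  refine ⟨b'.reindex e, {i | (e.symm i).isLeft}, ?_⟩
  ext i j
  rw [LinearMap.toMatrix_apply, Module.Basis.reindex_apply, hb', diagonal_apply]
  by_cases hj : (e.symm j).isLeft
  · rw [if_pos hj, ← Module.Basis.reindex_apply, Module.Basis.repr_self, Finsupp.single_apply]
    by_cases hij : j = i
    · subst hij; simp [hj]
    · simp [hij, Ne.symm hij]
  · rw [if_neg hj, map_zero, Finsupp.zero_apply]
    split_ifs with hij <;> simp [hij, hj]

theorem Matrix.exists_isUnit_eq_inv_mul_diagonal_indicator_mul {k ι : Type*} [Field k]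
    [Fintype ι] [DecidableEq ι] {A : Matrix ι ι k} (hA : IsIdempotentElem A) :
    ∃ g : Matrix ι ι k, IsUnit g ∧ ∃ s : Set ι, A = g⁻¹ * diagonal (s.indicator 1) * g := by
  let std := Pi.basisFun k ι
  obtain ⟨b, s, hb⟩ := LinearMap.IsIdempotentElem.exists_basis_toMatrix_eq_diagonal_indicator
    (hA.map toLinAlgEquiv') std
  have hinv : (b.toMatrix std)⁻¹ = std.toMatrix b :=
    inv_eq_right_inv (b.toMatrix_mul_toMatrix_flip std)
  refine ⟨b.toMatrix std, @isUnit_of_invertible _ _ _ (b.invertibleToMatrix std), s, ?_⟩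
  rw [hinv, ← hb, basis_toMatrix_mul_linearMap_toMatrix_mul_basis_toMatrix,
    LinearMap.toMatrix_eq_toMatrix']
  exact (LinearMap.toMatrix'_toLin' A).symm

theorem Matrix.inv_mul_mul_mul_eq_mul_inv_mul_mul_iff {k m n : Type*} [CommRing k]
    [Fintype m] [DecidableEq m] [Fintype n] [DecidableEq n] {g₁ : Matrix m m k}
    {g₂ : Matrix n n k} (hg₁ : IsUnit g₁) (hg₂ : IsUnit g₂) (D₁ : Matrix m m k)
    (D₂ : Matrix n n k) (A : Matrix m n k) :
    g₁⁻¹ * D₁ * g₁ * A = A * (g₂⁻¹ * D₂ * g₂) ↔ D₁ * (g₁ * A * g₂⁻¹) = g₁ * A * g₂⁻¹ * D₂ := by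
  obtain ⟨_⟩ := hg₁.nonempty_invertible
  obtain ⟨_⟩ := hg₂.nonempty_invertible
  rw [← mul_right_inj_of_invertible g₁, ← mul_left_inj_of_invertible g₂⁻¹]
  simp only [Matrix.mul_assoc, mul_inv_cancel_left_of_invertible, mul_inv_of_invertible,
    Matrix.mul_one]

theorem Matrix.inv_mul_mul_eq_iff {k n : Type*} [CommRing k] [Fintype n] [DecidableEq n]
    {g : Matrix n n k} (hg : IsUnit g) {P Q : Matrix n n k} :
    g⁻¹ * P * g = g⁻¹ * Q * g ↔ P = Q := by
  obtain ⟨_⟩ := hg.nonempty_invertible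
  rw [mul_left_inj_of_invertible, mul_right_inj_of_invertible]

theorem Matrix.isIdempotentElem_inv_mul_mul {k n : Type*} [CommRing k] [Fintype n]
    [DecidableEq n] {g P : Matrix n n k} (hg : IsUnit g) (hP : IsIdempotentElem P) :
    IsIdempotentElem (g⁻¹ * P * g) := by
  obtain ⟨_⟩ := hg.nonempty_invertible
  simp only [IsIdempotentElem, Matrix.mul_assoc, mul_inv_cancel_left_of_invertible]
  rw [← Matrix.mul_assoc P, hP.eq]

theorem Matrix.diagonal_indicator_mul_eq_mul_diagonal_indicator_iff {k m n : Type*}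
    [Semiring k] [Fintype m] [DecidableEq m] [Fintype n] [DecidableEq n] (s : Set m) (t : Set n)
    (N : Matrix m n k) :
    -- without the ascriptions, `*` elaborates with `CStarMatrix` as its result type
    diagonal (s.indicator (1 : m → k)) * N = N * diagonal (t.indicator (1 : n → k)) ↔
      ∀ i j, N i j ≠ 0 → (i ∈ s ↔ j ∈ t) := by
  rw [← Matrix.ext_iff]
  simp only [diagonal_mul, mul_diagonal]
  refine forall₂_congr fun i j => ?_
  by_cases hi : i ∈ s <;> by_cases hj : j ∈ t <;> simp [hi, hj, eq_comm]

theorem SimpleGraph.Preconnected.eq_empty_or_eq_univ {α : Type*} {G : SimpleGraph α}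
    (hG : G.Preconnected) {S : Set α} (hS : ∀ x y, G.Adj x y → (x ∈ S ↔ y ∈ S)) :
    S = ∅ ∨ S = Set.univ := by
  rcases S.eq_empty_or_nonempty with h | ⟨x, hx⟩
  · exact .inl h
  refine .inr (Set.eq_univ_of_forall fun y => ?_)
  obtain ⟨w⟩ := hG x y
  induction w with
  | nil => exact hx
  | cons h _ ih => exact ih ((hS _ _ h).1 hx)

section CoefficientQuiver

variable {k V E : Type*} {X : V → Type*} (src tgt : E → V)

def coeffQuiver [Zero k] (N : ∀ e, Matrix (X (tgt e)) (X (src e)) k) :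
    SimpleGraph (Σ v, X v) :=
  SimpleGraph.fromRel fun x y => ∃ e i j, N e i j ≠ 0 ∧ x = ⟨src e, j⟩ ∧ y = ⟨tgt e, i⟩

noncomputable def coordProj [Zero k] [One k] [∀ v, DecidableEq (X v)] (S : Set (Σ v, X v))
    (v : V) : Matrix (X v) (X v) k :=
  diagonal ((Sigma.mk v ⁻¹' S).indicator 1)

section Semiring

variable [Semiring k] [∀ v, DecidableEq (X v)] {S : Set (Σ v, X v)}

theorem isIdempotentElem_coordProj [∀ v, Fintype (X v)] (v : V) :
    IsIdempotentElem (coordProj S v : Matrix (X v) (X v) k) := by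
  rw [IsIdempotentElem, coordProj, diagonal_mul_diagonal]
  congr 1
  ext i
  by_cases hi : i ∈ Sigma.mk v ⁻¹' S <;> simp [hi]

theorem coordProj_intertwines_iff [∀ v, Fintype (X v)]
    (N : ∀ e, Matrix (X (tgt e)) (X (src e)) k) :
    (∀ e, coordProj S (tgt e) * N e = N e * coordProj S (src e)) ↔
      ∀ x y, (coeffQuiver src tgt N).Adj x y → (x ∈ S ↔ y ∈ S) := by
  have hcomm e : coordProj S (tgt e) * N e = N e * coordProj S (src e) ↔
      ∀ i j, N e i j ≠ 0 → ((⟨tgt e, i⟩ : Σ v, X v) ∈ S ↔ ⟨src e, j⟩ ∈ S) :=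
    diagonal_indicator_mul_eq_mul_diagonal_indicator_iff _ _ _
  simp only [hcomm]
  constructor
  · rintro hN x y ⟨-, ⟨e, i, j, h, rfl, rfl⟩ | ⟨e, i, j, h, rfl, rfl⟩⟩
    exacts [(hN e i j h).symm, hN e i j h]
  · intro hS e i j h
    by_cases heq : (⟨src e, j⟩ : Σ v, X v) = ⟨tgt e, i⟩
    · rw [heq]
    · exact (hS _ _ ⟨heq, .inl ⟨e, i, j, h, rfl, rfl⟩⟩).symm

variable [Nontrivial k]

theorem forall_coordProj_eq_zero_iff :
    (∀ v, coordProj S v = (0 : Matrix (X v) (X v) k)) ↔ S = ∅ := by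
  simp [coordProj, ← diagonal_zero, Set.eq_empty_iff_forall_notMem, Sigma.forall]

theorem forall_coordProj_eq_one_iff :
    (∀ v, coordProj S v = (1 : Matrix (X v) (X v) k)) ↔ S = Set.univ := by
  classical
  simp [coordProj, ← diagonal_one, Set.eq_univ_iff_forall, Sigma.forall, Set.indicator_apply]

end Semiring

section Field

variable [Field k] [∀ v, Fintype (X v)] [∀ v, DecidableEq (X v)]
  {g : ∀ v, Matrix (X v) (X v) k} {S : Set (Σ v, X v)}

theorem intertwines_inv_mul_coordProj_mul_iff (hg : ∀ v, IsUnit (g v))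
    (M : ∀ e, Matrix (X (tgt e)) (X (src e)) k) :
    (∀ e, (g (tgt e))⁻¹ * coordProj S (tgt e) * g (tgt e) * M e =
        M e * ((g (src e))⁻¹ * coordProj S (src e) * g (src e))) ↔
      ∀ x y, (coeffQuiver src tgt fun e => g (tgt e) * M e * (g (src e))⁻¹).Adj x y →
        (x ∈ S ↔ y ∈ S) := by
  rw [← coordProj_intertwines_iff]
  exact forall_congr' fun e => inv_mul_mul_mul_eq_mul_inv_mul_mul_iff (hg _) (hg _) _ _ _

theorem forall_inv_mul_coordProj_mul_eq_zero_iff (hg : ∀ v, IsUnit (g v)) :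
    (∀ v, (g v)⁻¹ * coordProj S v * g v = 0) ↔ S = ∅ := by
  rw [← forall_coordProj_eq_zero_iff (k := k)]
  refine forall_congr' fun v => ?_
  simpa using inv_mul_mul_eq_iff (hg v) (P := coordProj S v) (Q := 0)

theorem forall_inv_mul_coordProj_mul_eq_one_iff (hg : ∀ v, IsUnit (g v)) :
    (∀ v, (g v)⁻¹ * coordProj S v * g v = 1) ↔ S = Set.univ := by
  rw [← forall_coordProj_eq_one_iff (k := k)]
  refine forall_congr' fun v => ?_
  simpa [nonsing_inv_mul _ ((isUnit_iff_isUnit_det _).1 (hg v))] using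
    inv_mul_mul_eq_iff (hg v) (P := coordProj S v) (Q := 1)

theorem connected_coeffQuiver_of_indecomposable (M : ∀ e, Matrix (X (tgt e)) (X (src e)) k)
    (hne : Nonempty (Σ v, X v))
    (hind : ∀ f : ∀ v, Matrix (X v) (X v) k,
      (∀ e, f (tgt e) * M e = M e * f (src e)) → (∀ v, f v * f v = f v) →
        (∀ v, f v = 0) ∨ (∀ v, f v = 1))
    (hg : ∀ v, IsUnit (g v)) :
    (coeffQuiver src tgt fun e => g (tgt e) * M e * (g (src e))⁻¹).Connected := by
  set G := coeffQuiver src tgt fun e => g (tgt e) * M e * (g (src e))⁻¹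
  refine (SimpleGraph.connected_iff G).2 ⟨fun x y => ?_, hne⟩
  by_contra hxy
  let S := {z | G.Reachable x z}
  have hS : ∀ z w, G.Adj z w → (z ∈ S ↔ w ∈ S) := fun z w h =>
    ⟨fun hz => hz.trans h.reachable, fun hw => hw.trans h.symm.reachable⟩
  rcases hind (fun v => (g v)⁻¹ * coordProj S v * g v)
      ((intertwines_inv_mul_coordProj_mul_iff src tgt hg M).2 hS)
      (fun v => isIdempotentElem_inv_mul_mul (hg v) (isIdempotentElem_coordProj v)) with h | h
  · exact ((forall_inv_mul_coordProj_mul_eq_zero_iff hg).1 h).subset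
      (SimpleGraph.Reachable.refl x)
  · exact hxy (((forall_inv_mul_coordProj_mul_eq_one_iff hg).1 h).symm.subset (Set.mem_univ y))

theorem indecomposable_of_connected_coeffQuiver (M : ∀ e, Matrix (X (tgt e)) (X (src e)) k)
    (hconn : ∀ g : ∀ v, Matrix (X v) (X v) k, (∀ v, IsUnit (g v)) →
      (coeffQuiver src tgt fun e => g (tgt e) * M e * (g (src e))⁻¹).Connected) :
    Nonempty (Σ v, X v) ∧ ∀ f : ∀ v, Matrix (X v) (X v) k,
      (∀ e, f (tgt e) * M e = M e * f (src e)) → (∀ v, f v * f v = f v) →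
        (∀ v, f v = 0) ∨ (∀ v, f v = 1) := by
  refine ⟨(hconn 1 fun _ => isUnit_one).nonempty, fun f hf hidem => ?_⟩
  choose g hg s hs using fun v => exists_isUnit_eq_inv_mul_diagonal_indicator_mul (hidem v)
  let S : Set (Σ v, X v) := {x | x.2 ∈ s x.1}
  obtain rfl : f = fun v => (g v)⁻¹ * coordProj S v * g v := funext hs
  have hS := (intertwines_inv_mul_coordProj_mul_iff src tgt hg M).1 hf
  rcases (hconn g hg).preconnected.eq_empty_or_eq_univ hS with h | h
  · exact .inl ((forall_inv_mul_coordProj_mul_eq_zero_iff hg).2 h)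
  · exact .inr ((forall_inv_mul_coordProj_mul_eq_one_iff hg).2 h)

theorem indecomposable_iff_forall_connected_coeffQuiver
    (M : ∀ e, Matrix (X (tgt e)) (X (src e)) k) :
    (Nonempty (Σ v, X v) ∧ ∀ f : ∀ v, Matrix (X v) (X v) k,
      (∀ e, f (tgt e) * M e = M e * f (src e)) → (∀ v, f v * f v = f v) →
        (∀ v, f v = 0) ∨ (∀ v, f v = 1)) ↔
    ∀ g : ∀ v, Matrix (X v) (X v) k, (∀ v, IsUnit (g v)) →
      (coeffQuiver src tgt fun e => g (tgt e) * M e * (g (src e))⁻¹).Connected :=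
  ⟨fun ⟨hne, hind⟩ _ => connected_coeffQuiver_of_indecomposable src tgt M hne hind,
    indecomposable_of_connected_coeffQuiver src tgt M⟩

end Field

end CoefficientQuiver

theorem stmt_11_general {k V E : Type} [Field k]
    (src tgt : E → V) (d : V → ℕ)
    (M : ∀ e, Matrix (Fin (d (tgt e))) (Fin (d (src e))) k) :
    ((∃ v, 0 < d v) ∧
      ∀ f : ∀ v, Matrix (Fin (d v)) (Fin (d v)) k,
        (∀ e, f (tgt e) * M e = M e * f (src e)) → (∀ v, f v * f v = f v) →
        (∀ v, f v = 0) ∨ (∀ v, f v = 1)) ↔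
    (∀ g : ∀ v, Matrix (Fin (d v)) (Fin (d v)) k, (∀ v, IsUnit (g v)) →
      (SimpleGraph.fromRel (fun x y : Σ v, Fin (d v) =>
        ∃ e, ∃ i : Fin (d (tgt e)), ∃ j : Fin (d (src e)),
          (g (tgt e) * M e * (g (src e))⁻¹) i j ≠ 0 ∧
            x = ⟨src e, j⟩ ∧ y = ⟨tgt e, i⟩)).Connected) := by
  have hpos : (∃ v, 0 < d v) ↔ Nonempty (Σ v, Fin (d v)) := by
    simp only [nonempty_sigma, Fin.pos_iff_nonempty]
  rw [hpos]
  exact indecomposable_iff_forall_connected_coeffQuiver (X := fun v => Fin (d v)) src tgt M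

/-- A representation of a finite quiver (given by dimensions `d` and matrices `M`) is
indecomposable if and only if for every choice of basis (i.e. every conjugation by a
family of invertible matrices `g`) the coefficient quiver is connected. -/
theorem stmt_11 {k V E : Type} [Field k] [Fintype V] [Fintype E]
    (src tgt : E → V) (d : V → ℕ)
    (M : ∀ e, Matrix (Fin (d (tgt e))) (Fin (d (src e))) k) :
    ((∃ v, 0 < d v) ∧
      ∀ f : ∀ v, Matrix (Fin (d v)) (Fin (d v)) k,
        (∀ e, f (tgt e) * M e = M e * f (src e)) → (∀ v, f v * f v = f v) →
        (∀ v, f v = 0) ∨ (∀ v, f v = 1)) ↔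
    (∀ g : ∀ v, Matrix (Fin (d v)) (Fin (d v)) k, (∀ v, IsUnit (g v)) →
      (SimpleGraph.fromRel (fun x y : Σ v, Fin (d v) =>
        ∃ e, ∃ i : Fin (d (tgt e)), ∃ j : Fin (d (src e)),
          (g (tgt e) * M e * (g (src e))⁻¹) i j ≠ 0 ∧
            x = ⟨src e, j⟩ ∧ y = ⟨tgt e, i⟩)).Connected) :=
  stmt_11_general src tgt d M
end

section
/- For n ≥ 1 and λ ∈ k*, the regular Kronecker representation R_{n,λ} given by (Id_n, J_{n,λ}) where J_{n,λ} is the lower-triangular Jordan block with eigenvalue λ, is not a tree module: every coefficient quiver of R_{n,λ} has 2n vertices and at least 2n edges. -/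
/-! Both matrices of `R_{n,λ}` are invertible (`det J_{n,λ} = λⁿ`), and a base change keeps
them invertible. An invertible matrix has a nonzero entry in every row, so each of the two
matrices contributes at least `n` arrows to the coefficient quiver. -/

namespace Matrix

variable {R ι : Type*} [CommRing R]

theorem card_le_ncard_ne_zero_of_isUnit [Nontrivial R] [Fintype ι] [DecidableEq ι]
    {A : Matrix ι ι R} (hA : IsUnit A) :
    Fintype.card ι ≤ Set.ncard {p : ι × ι | A p.1 p.2 ≠ 0} := by
  have hrow : ∀ i, ∃ j, A i j ≠ 0 := by
    intro i
    by_contra! h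
    have hdet := (isUnit_iff_isUnit_det A).mp hA
    rw [det_eq_zero_of_row_eq_zero i h] at hdet
    exact not_isUnit_zero hdet
  choose f hf using hrow
  calc Fintype.card ι = Set.ncard (Set.univ : Set ι) := by
        rw [Set.ncard_univ, Nat.card_eq_fintype_card]
    _ ≤ Set.ncard {p : ι × ι | A p.1 p.2 ≠ 0} :=
      Set.ncard_le_ncard_of_injOn (fun i => (i, f i)) (fun i _ => hf i)
        (fun _ _ _ _ h => (Prod.ext_iff.mp h).1) (Set.toFinite _)

def lowerJordanBlock (n : ℕ) (lam : R) : Matrix (Fin n) (Fin n) R :=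
  of fun i j => if i = j then lam else if (j : ℕ) + 1 = (i : ℕ) then 1 else 0

theorem det_lowerJordanBlock (n : ℕ) (lam : R) : (lowerJordanBlock n lam).det = lam ^ n := by
  have htri : (lowerJordanBlock n lam).IsLowerTriangular := by
    intro i j hij
    rw [OrderDual.toDual_lt_toDual] at hij
    simp only [lowerJordanBlock, of_apply]
    rw [if_neg (by omega), if_neg (by omega)]
  rw [det_of_isLowerTriangular _ htri]
  simp [lowerJordanBlock]

theorem isUnit_lowerJordanBlock (n : ℕ) {lam : R} (hlam : IsUnit lam) :
    IsUnit (lowerJordanBlock n lam) := by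
  rw [isUnit_iff_isUnit_det, det_lowerJordanBlock]
  exact hlam.pow n

end Matrix

open Matrix in
theorem stmt_12_general {k : Type} [Field k] (n : ℕ) (lam : k) (hlam : lam ≠ 0)
    (J : Matrix (Fin n) (Fin n) k)
    (hJ : J = Matrix.of fun i j : Fin n =>
      if i = j then lam else if (j : ℕ) + 1 = (i : ℕ) then 1 else 0)
    (g₁ g₂ : Matrix (Fin n) (Fin n) k) (h₁ : IsUnit g₁) (h₂ : IsUnit g₂) :
    Fintype.card (Fin n ⊕ Fin n) = 2 * n ∧
    2 * n ≤ Set.ncard {p : Fin n × Fin n | ((g₂ * 1 * g₁⁻¹ : Matrix (Fin n) (Fin n) k) p.1 p.2) ≠ 0} +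
        Set.ncard {p : Fin n × Fin n | ((g₂ * J * g₁⁻¹ : Matrix (Fin n) (Fin n) k) p.1 p.2) ≠ 0} := by
  have hJunit : IsUnit J := hJ ▸ isUnit_lowerJordanBlock n hlam.isUnit
  have hg₁ : IsUnit g₁⁻¹ := isUnit_nonsing_inv_iff.mpr h₁
  have hId := card_le_ncard_ne_zero_of_isUnit ((h₂.mul isUnit_one).mul hg₁)
  have hJ' := card_le_ncard_ne_zero_of_isUnit ((h₂.mul hJunit).mul hg₁)
  rw [Fintype.card_fin] at hId hJ'
  refine ⟨by simp [two_mul], ?_⟩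
  omega

/-- The regular Kronecker representation `R_{n,λ} = (1, J_{n,λ})` (`λ ≠ 0`) is not a tree
module: with respect to every basis, the coefficient quiver has `2n` vertices but the two
representation matrices have at least `2n` nonzero entries in total. -/
theorem stmt_12 {k : Type} [Field k] (n : ℕ) (hn : 1 ≤ n) (lam : k) (hlam : lam ≠ 0)
    (J : Matrix (Fin n) (Fin n) k)
    (hJ : J = Matrix.of fun i j : Fin n =>
      if i = j then lam else if (j : ℕ) + 1 = (i : ℕ) then 1 else 0)
    (g₁ g₂ : Matrix (Fin n) (Fin n) k) (h₁ : IsUnit g₁) (h₂ : IsUnit g₂) :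
    Fintype.card (Fin n ⊕ Fin n) = 2 * n ∧
    2 * n ≤ Set.ncard {p : Fin n × Fin n | ((g₂ * 1 * g₁⁻¹ : Matrix (Fin n) (Fin n) k) p.1 p.2) ≠ 0} +
        Set.ncard {p : Fin n × Fin n | ((g₂ * J * g₁⁻¹ : Matrix (Fin n) (Fin n) k) p.1 p.2) ≠ 0} :=
  stmt_12_general n lam hlam J hJ g₁ g₂ h₁ h₂
end

section
/- Let K be a finite acyclic quiver, s a sink with a unique incoming arrow α : q → s, and M a K-representation with M(s) ≅ k ≅ M(q) and M(α) ≠ 0. Then there is an exact sequence 0 → E_s → M → C → 0 with C(s) = 0, and End_K(C) ≅ End_K(M) and Ext¹_K(M, M) ≅ Ext¹_K(C, C). In particular, if M is indecomposable (resp. exceptional) then so is C. -/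
/-!
Because `α` is the only arrow into the sink `s` and `f α` is an isomorphism of one-dimensional
spaces, an endomorphism of `M` is determined by its components away from `s`, and any family of
endomorphisms away from `s` commuting with the arrows not ending in `s` extends uniquely to `s`.
Away from `s` the quotient map `π : M → C` is bijective, so pushing endomorphisms forward along
`π` identifies `End(M)` with `End(C)`. In Ringel's presentation `Ext¹(M, M) = coker D_M`,
pushing forward edge-cochains along `π` is surjective, intertwines `D_M` and `D_C`, and its kernel
(the cochains supported on `α`) consists of coboundaries of families supported at `s`; hence
`coker D_M ≅ coker D_C`.
-/

open Function

section Representation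

variable {k V E : Type*} [CommRing k] {src tgt : E → V}
  {M : V → Type*} [∀ v, AddCommGroup (M v)] [∀ v, Module k (M v)]

def IsRepEnd (f : ∀ e, M (src e) →ₗ[k] M (tgt e)) (η : ∀ v, M v →ₗ[k] M v) : Prop :=
  ∀ e x, η (tgt e) (f e x) = f e (η (src e) x)

-- Ringel's map: its cokernel is `Ext¹(M, M)`.
def repDiff (f : ∀ e, M (src e) →ₗ[k] M (tgt e)) :
    (∀ v, M v →ₗ[k] M v) →ₗ[k] (∀ e, M (src e) →ₗ[k] M (tgt e)) where
  toFun η e := f e ∘ₗ η (src e) - η (tgt e) ∘ₗ f e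
  map_add' η θ := by ext e x; simp only [Pi.add_apply, LinearMap.sub_apply, LinearMap.comp_apply,
    LinearMap.add_apply, map_add]; abel
  map_smul' c η := by ext e x; simp [smul_sub]

theorem repDiff_apply (f : ∀ e, M (src e) →ₗ[k] M (tgt e)) (η : ∀ v, M v →ₗ[k] M v) (e : E) :
    repDiff f η e = f e ∘ₗ η (src e) - η (tgt e) ∘ₗ f e :=
  rfl

theorem IsRepEnd.comp {f : ∀ e, M (src e) →ₗ[k] M (tgt e)} {η η' : ∀ v, M v →ₗ[k] M v}
    (hη : IsRepEnd f η) (hη' : IsRepEnd f η') : IsRepEnd f (fun v => η v ∘ₗ η' v) := by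
  intro e x
  simp only [LinearMap.comp_apply]
  rw [hη', hη]

def HasTrivialIdempotents (f : ∀ e, M (src e) →ₗ[k] M (tgt e)) : Prop :=
  ∀ η : ∀ v, M v →ₗ[k] M v, IsRepEnd f η → (∀ v, η v ∘ₗ η v = η v) →
    (∀ v, η v = 0) ∨ (∀ v, η v = LinearMap.id)

theorem mem_range_repDiff_of_eq_zero_of_ne [DecidableEq V] {f : ∀ e, M (src e) →ₗ[k] M (tgt e)}
    {α : E} (hsink : ∀ e, src e ≠ tgt α) (huniq : ∀ e, tgt e = tgt α → e = α)
    (hfα : Bijective (f α)) {h : ∀ e, M (src e) →ₗ[k] M (tgt e)} (hzero : ∀ e, e ≠ α → h e = 0) :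
    h ∈ LinearMap.range (repDiff f) := by
  let φ := LinearEquiv.ofBijective (f α) hfα
  refine ⟨Pi.single (tgt α) (-(h α ∘ₗ φ.symm.toLinearMap)), funext fun e => ?_⟩
  rw [repDiff_apply, Pi.single_eq_of_ne (hsink e)]
  by_cases he : e = α
  · subst he
    ext x
    simp [φ, LinearEquiv.ofBijective_symm_apply_apply]
  · rw [Pi.single_eq_of_ne (mt (huniq e) he), hzero e he]
    simp

end Representation

theorem LinearMap.nonempty_quotient_range_equiv_of_surjective {R A B A' B' : Type*} [Ring R]
    [AddCommGroup A] [Module R A] [AddCommGroup B] [Module R B]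
    [AddCommGroup A'] [Module R A'] [AddCommGroup B'] [Module R B']
    {D : A →ₗ[R] B} {D' : A' →ₗ[R] B'} {P : B →ₗ[R] B'} {Q : A →ₗ[R] A'}
    (hP : Surjective P) (hQ : Surjective Q) (hcomm : P ∘ₗ D = D' ∘ₗ Q)
    (hker : LinearMap.ker P ≤ LinearMap.range D) :
    Nonempty ((B ⧸ LinearMap.range D) ≃ₗ[R] (B' ⧸ LinearMap.range D')) := by
  let F := (LinearMap.range D').mkQ ∘ₗ P
  have hF : Surjective F := (Submodule.mkQ_surjective _).comp hP
  have hkerF : LinearMap.ker F = LinearMap.range D := by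
    rw [LinearMap.ker_comp, Submodule.ker_mkQ]
    apply le_antisymm
    · rintro b ⟨a', hb⟩
      obtain ⟨a, rfl⟩ := hQ a'
      have hPD : P (D a) = D' (Q a) := LinearMap.congr_fun hcomm a
      have hba : b - D a ∈ LinearMap.ker P := by
        rw [LinearMap.mem_ker, map_sub, hPD, hb, sub_self]
      simpa using add_mem (hker hba) (LinearMap.mem_range_self D a)
    · rintro _ ⟨a, rfl⟩
      exact ⟨Q a, by rw [← LinearMap.comp_apply, ← hcomm, LinearMap.comp_apply]⟩
  exact ⟨(Submodule.quotEquivOfEq _ _ hkerF.symm).trans (F.quotKerEquivOfSurjective hF)⟩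

section KillingAVertex

variable {k V E : Type*} [CommRing k] {src tgt : E → V}
  {M C : V → Type*} [∀ v, AddCommGroup (M v)] [∀ v, Module k (M v)]
  [∀ v, AddCommGroup (C v)] [∀ v, Module k (C v)]

structure KillsVertex (f : ∀ e, M (src e) →ₗ[k] M (tgt e)) (g : ∀ e, C (src e) →ₗ[k] C (tgt e))
    (π : ∀ v, M v →ₗ[k] C v) (s : V) : Prop where
  comm : ∀ e x, π (tgt e) (f e x) = g e (π (src e) x)
  subsingleton : Subsingleton (C s)
  bijective : ∀ v, v ≠ s → Bijective (π v)

theorem KillsVertex.trans_equiv {D : V → Type*} [∀ v, AddCommGroup (D v)] [∀ v, Module k (D v)]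
    {f : ∀ e, M (src e) →ₗ[k] M (tgt e)} {g : ∀ e, C (src e) →ₗ[k] C (tgt e)}
    {π : ∀ v, M v →ₗ[k] C v} {s : V} (hπ : KillsVertex f g π s) (ψ : ∀ v, C v ≃ₗ[k] D v) :
    KillsVertex f (fun e => (ψ (tgt e)).toLinearMap ∘ₗ g e ∘ₗ (ψ (src e)).symm.toLinearMap)
      (fun v => (ψ v).toLinearMap ∘ₗ π v) s where
  comm e x := by simp [hπ.comm]
  subsingleton := have := hπ.subsingleton; (ψ s).symm.toEquiv.subsingleton
  bijective v hv := (ψ v).bijective.comp (hπ.bijective v hv)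

namespace KillsVertex

variable [DecidableEq V] {f : ∀ e, M (src e) →ₗ[k] M (tgt e)} {g : ∀ e, C (src e) →ₗ[k] C (tgt e)}
  {π : ∀ v, M v →ₗ[k] C v} {s : V} (hπ : KillsVertex f g π s)
include hπ

-- At `s` any map is a right inverse of `π s`, since `C s = 0`.
noncomputable def rightInv (v : V) : C v →ₗ[k] M v :=
  if h : v = s then 0 else (LinearEquiv.ofBijective (π v) (hπ.bijective v h)).symm

theorem apply_rightInv (v : V) (y : C v) : π v (hπ.rightInv v y) = y := by
  by_cases h : v = s
  · subst h
    have := hπ.subsingleton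
    exact Subsingleton.elim _ _
  · simp only [rightInv, h, dite_false]
    exact (LinearEquiv.ofBijective (π v) _).apply_symm_apply y

theorem rightInv_apply {v : V} (hv : v ≠ s) (x : M v) : hπ.rightInv v (π v x) = x := by
  simp only [rightInv, hv, dite_false]
  exact LinearEquiv.ofBijective_symm_apply_apply _ _

theorem surjective (v : V) : Surjective (π v) :=
  fun y => ⟨_, hπ.apply_rightInv v y⟩

noncomputable def pushEnd : (∀ v, M v →ₗ[k] M v) →ₗ[k] (∀ v, C v →ₗ[k] C v) where
  toFun η v := π v ∘ₗ η v ∘ₗ hπ.rightInv v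
  map_add' η θ := by ext v y; simp
  map_smul' c η := by ext v y; simp

noncomputable def pushHom :
    (∀ e, M (src e) →ₗ[k] M (tgt e)) →ₗ[k] (∀ e, C (src e) →ₗ[k] C (tgt e)) where
  toFun h e := π (tgt e) ∘ₗ h e ∘ₗ hπ.rightInv (src e)
  map_add' h h' := by ext e y; simp
  map_smul' c h := by ext e y; simp

theorem pushEnd_apply_apply (η : ∀ v, M v →ₗ[k] M v) (v : V) (x : M v) :
    hπ.pushEnd η v (π v x) = π v (η v x) := by
  by_cases hv : v = s
  · subst hv
    have := hπ.subsingleton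
    exact Subsingleton.elim _ _
  · simp [pushEnd, hπ.rightInv_apply hv]

theorem pushEnd_eq_of_apply {η : ∀ v, M v →ₗ[k] M v} {v : V} {θ : C v →ₗ[k] C v}
    (h : ∀ x, θ (π v x) = π v (η v x)) : hπ.pushEnd η v = θ := by
  ext y
  obtain ⟨x, rfl⟩ := hπ.surjective v y
  rw [pushEnd_apply_apply, h]

theorem pushEnd_surjective : Surjective hπ.pushEnd := fun θ =>
  ⟨fun v => hπ.rightInv v ∘ₗ θ v ∘ₗ π v, funext fun v =>
    hπ.pushEnd_eq_of_apply fun _ => (hπ.apply_rightInv v _).symm⟩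

theorem pushEnd_comp (η η' : ∀ v, M v →ₗ[k] M v) (v : V) :
    hπ.pushEnd (fun v => η v ∘ₗ η' v) v = hπ.pushEnd η v ∘ₗ hπ.pushEnd η' v :=
  hπ.pushEnd_eq_of_apply fun _ => by simp [pushEnd_apply_apply]

theorem pushEnd_id : hπ.pushEnd (fun _ => LinearMap.id) = fun _ => LinearMap.id :=
  funext fun _ => hπ.pushEnd_eq_of_apply fun _ => rfl

theorem isRepEnd_pushEnd {η : ∀ v, M v →ₗ[k] M v} (hη : IsRepEnd f η) :
    IsRepEnd g (hπ.pushEnd η) := by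
  intro e y
  obtain ⟨x, rfl⟩ := hπ.surjective (src e) y
  rw [← hπ.comm, pushEnd_apply_apply, hη, hπ.comm, pushEnd_apply_apply]

theorem pushHom_apply_apply (h : ∀ e, M (src e) →ₗ[k] M (tgt e)) {e : E} (he : src e ≠ s)
    (x : M (src e)) : hπ.pushHom h e (π (src e) x) = π (tgt e) (h e x) := by
  simp [pushHom, hπ.rightInv_apply he]

theorem pushHom_surjective : Surjective hπ.pushHom := fun h' =>
  ⟨fun e => hπ.rightInv (tgt e) ∘ₗ h' e ∘ₗ π (src e), by ext e y; simp [pushHom, apply_rightInv]⟩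

theorem pushHom_comp_repDiff (hsink : ∀ e, src e ≠ s) :
    hπ.pushHom ∘ₗ repDiff f = repDiff g ∘ₗ hπ.pushEnd := by
  ext η e y
  obtain ⟨x, rfl⟩ := hπ.surjective (src e) y
  simp only [LinearMap.comp_apply, hπ.pushHom_apply_apply _ (hsink e), repDiff_apply,
    LinearMap.sub_apply, map_sub, hπ.comm, pushEnd_apply_apply]
  rw [← hπ.comm e x, pushEnd_apply_apply]

theorem pushEnd_congr {η η' : ∀ v, M v →ₗ[k] M v} (h : ∀ v, v ≠ s → η v = η' v) :
    hπ.pushEnd η = hπ.pushEnd η' := by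
  funext v
  refine hπ.pushEnd_eq_of_apply fun x => ?_
  by_cases hv : v = s
  · subst hv
    have := hπ.subsingleton
    exact Subsingleton.elim _ _
  · rw [pushEnd_apply_apply, h v hv]

end KillsVertex

namespace KillsVertex

variable [DecidableEq V] {f : ∀ e, M (src e) →ₗ[k] M (tgt e)} {g : ∀ e, C (src e) →ₗ[k] C (tgt e)}
  {π : ∀ v, M v →ₗ[k] C v} {α : E} (hπ : KillsVertex f g π (tgt α))
  (hsink : ∀ e, src e ≠ tgt α) (hfα : Bijective (f α))
include hπ hsink hfα

theorem eq_of_pushEnd_eq {η η' : ∀ v, M v →ₗ[k] M v} (hη : IsRepEnd f η) (hη' : IsRepEnd f η')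
    (h : hπ.pushEnd η = hπ.pushEnd η') : η = η' := by
  have hoff : ∀ v, v ≠ tgt α → η v = η' v := fun v hv => by
    ext x
    apply (hπ.bijective v hv).injective
    rw [← hπ.pushEnd_apply_apply, h, pushEnd_apply_apply]
  funext v
  by_cases hv : v = tgt α
  · subst hv
    ext y
    obtain ⟨x, rfl⟩ := hfα.surjective y
    rw [hη, hη', hoff _ (hsink α)]
  · exact hoff v hv

theorem exists_isRepEnd_pushEnd_eq (huniq : ∀ e, tgt e = tgt α → e = α)
    {θ : ∀ v, C v →ₗ[k] C v} (hθ : IsRepEnd g θ) : ∃ η, IsRepEnd f η ∧ hπ.pushEnd η = θ := by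
  obtain ⟨η, rfl⟩ := hπ.pushEnd_surjective θ
  let φ := LinearEquiv.ofBijective (f α) hfα
  -- `η` is already a morphism on every arrow other than `α`; at `tgt α` it is redefined by
  -- transporting `η (src α)` along `f α`
  refine ⟨update η (tgt α) (φ.toLinearMap ∘ₗ η (src α) ∘ₗ φ.symm.toLinearMap), fun e x => ?_,
    hπ.pushEnd_congr fun v hv => update_of_ne hv _ _⟩
  by_cases he : e = α
  · subst he
    simp [update_of_ne (hsink e), φ, LinearEquiv.ofBijective_symm_apply_apply]
  · have hte : tgt e ≠ tgt α := mt (huniq e) he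
    rw [update_of_ne hte, update_of_ne (hsink e)]
    apply (hπ.bijective _ hte).injective
    rw [← hπ.pushEnd_apply_apply, hπ.comm, hθ, pushEnd_apply_apply, hπ.comm]

theorem ker_pushHom_le_range_repDiff (huniq : ∀ e, tgt e = tgt α → e = α) :
    LinearMap.ker hπ.pushHom ≤ LinearMap.range (repDiff f) := by
  intro h hh
  refine mem_range_repDiff_of_eq_zero_of_ne hsink huniq hfα fun e he => ?_
  ext x
  apply (hπ.bijective _ (mt (huniq e) he)).injective
  rw [← hπ.pushHom_apply_apply h (hsink e), LinearMap.mem_ker.mp hh]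
  simp

end KillsVertex

namespace KillsVertex

variable [DecidableEq V] {f : ∀ e, M (src e) →ₗ[k] M (tgt e)} {g : ∀ e, C (src e) →ₗ[k] C (tgt e)}
  {π : ∀ v, M v →ₗ[k] C v} {α : E} (hπ : KillsVertex f g π (tgt α))
  (hsink : ∀ e, src e ≠ tgt α) (hfα : Bijective (f α)) (huniq : ∀ e, tgt e = tgt α → e = α)
include hπ hsink hfα huniq

theorem bijective_pushEnd_restrict :
    Bijective fun η : {η // IsRepEnd f η} =>
      (⟨hπ.pushEnd η.1, hπ.isRepEnd_pushEnd η.2⟩ : {θ // IsRepEnd g θ}) := by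
  refine ⟨fun η η' h => Subtype.ext ?_, fun θ => ?_⟩
  · exact hπ.eq_of_pushEnd_eq hsink hfα η.2 η'.2 (congrArg Subtype.val h)
  · obtain ⟨η, hη, hηθ⟩ := hπ.exists_isRepEnd_pushEnd_eq hsink hfα huniq θ.2
    exact ⟨⟨η, hη⟩, Subtype.ext hηθ⟩

theorem nonempty_quotient_range_repDiff_equiv :
    Nonempty (((∀ e, M (src e) →ₗ[k] M (tgt e)) ⧸ LinearMap.range (repDiff f)) ≃ₗ[k]
      ((∀ e, C (src e) →ₗ[k] C (tgt e)) ⧸ LinearMap.range (repDiff g))) :=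
  LinearMap.nonempty_quotient_range_equiv_of_surjective hπ.pushHom_surjective hπ.pushEnd_surjective
    (hπ.pushHom_comp_repDiff hsink) (hπ.ker_pushHom_le_range_repDiff hsink hfα huniq)

theorem hasTrivialIdempotents (hM : HasTrivialIdempotents f) : HasTrivialIdempotents g := by
  intro θ hθ hidem
  obtain ⟨η, hη, rfl⟩ := hπ.exists_isRepEnd_pushEnd_eq hsink hfα huniq hθ
  have hηidem : (fun v => η v ∘ₗ η v) = η :=
    hπ.eq_of_pushEnd_eq hsink hfα (hη.comp hη) hη (funext fun v => by rw [pushEnd_comp, hidem])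
  rcases hM η hη (congrFun hηidem) with h0 | h1
  · left
    simp [show η = 0 from funext h0]
  · right
    simp [show η = fun _ => LinearMap.id from funext h1, pushEnd_id]

end KillsVertex

end KillingAVertex

universe u w in
theorem exists_killsVertex {k : Type u} {V E : Type*} [Field k] {src tgt : E → V}
    (M : V → Type*) [∀ v, AddCommGroup (M v)] [∀ v, Module k (M v)]
    [∀ v, FiniteDimensional k (M v)] (f : ∀ e, M (src e) →ₗ[k] M (tgt e))
    {s : V} (hsink : ∀ e, src e ≠ s) :
    ∃ (C : V → ModuleCat.{max u w} k) (g : ∀ e, C (src e) →ₗ[k] C (tgt e))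
      (π : ∀ v, M v →ₗ[k] C v), KillsVertex f g π s := by
  classical
  let S : ∀ v, Submodule k (M v) := fun v => if v = s then ⊤ else ⊥
  have hS : ∀ v, v ≠ s → S v = ⊥ := fun v hv => if_neg hv
  have hquot : KillsVertex f (fun e => (S (src e)).mapQ (S (tgt e)) (f e) (by simp [hS _ (hsink e)]))
      (fun v => (S v).mkQ) s :=
    { comm := fun _ _ => rfl
      subsingleton := Submodule.Quotient.subsingleton_iff.mpr (if_pos rfl)
      bijective := fun v hv => ⟨by simp [← LinearMap.ker_eq_bot, hS v hv], (S v).mkQ_surjective⟩ }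
  -- the quotient lives in the universe of `M`; a coordinate model moves it to any universe
  exact ⟨fun v => ModuleCat.of k (ULift.{w} (Fin (Module.finrank k (M v ⧸ S v)) → k)), _, _,
    hquot.trans_equiv fun v =>
      (Module.finBasis k (M v ⧸ S v)).equivFun.trans (ULift.moduleEquiv.{_, _, w}).symm⟩

theorem stmt_16_general {k V E : Type} [Field k]
    (src tgt : E → V)
    (s : V) (hsink : ∀ e, src e ≠ s)
    (α : E) (hα : tgt α = s) (huniq : ∀ e, tgt e = s → e = α)
    (W : V → ModuleCat k) (hfd : ∀ v, FiniteDimensional k (W v))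
    (f : ∀ e, W (src e) →ₗ[k] W (tgt e))
    (hs1 : Module.finrank k (W s) = 1)
    (hq1 : Module.finrank k (W (src α)) = 1)
    (hfα : f α ≠ 0)
    (DM : (∀ v, W v →ₗ[k] W v) →ₗ[k] (∀ e, W (src e) →ₗ[k] W (tgt e)))
    (hDM : ∀ η e, DM η e = f e ∘ₗ η (src e) - η (tgt e) ∘ₗ f e) :
    ∃ (WC : V → ModuleCat k) (fC : ∀ e, WC (src e) →ₗ[k] WC (tgt e))
      (π : ∀ v, W v →ₗ[k] WC v),
      -- `π : M → C` is a morphism of representations, bijective away from `s`,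
      -- with `C` vanishing at `s` (so `0 → E_s → M → C → 0` is exact)
      (∀ e x, π (tgt e) (f e x) = fC e (π (src e) x)) ∧
      Subsingleton (WC s) ∧
      (∀ v, v ≠ s → Function.Bijective (π v)) ∧
      -- `End(C) ≅ End(M)`
      (∃ Φ : {η : ∀ v, W v →ₗ[k] W v //
                ∀ e x, η (tgt e) (f e x) = f e (η (src e) x)} →
             {η : ∀ v, WC v →ₗ[k] WC v //
                ∀ e x, η (tgt e) (fC e x) = fC e (η (src e) x)},
        Function.Bijective Φ ∧
        (∀ a b c : {η : ∀ v, W v →ₗ[k] W v //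
            ∀ e x, η (tgt e) (f e x) = f e (η (src e) x)},
          (∀ v, c.1 v = a.1 v + b.1 v) → ∀ v, (Φ c).1 v = (Φ a).1 v + (Φ b).1 v) ∧
        (∀ a b c : {η : ∀ v, W v →ₗ[k] W v //
            ∀ e x, η (tgt e) (f e x) = f e (η (src e) x)},
          (∀ v, c.1 v = a.1 v ∘ₗ b.1 v) → ∀ v, (Φ c).1 v = (Φ a).1 v ∘ₗ (Φ b).1 v)) ∧
      -- `Ext¹(M,M) ≅ Ext¹(C,C)`, both realised as cokernels
      (∃ DC : (∀ v, WC v →ₗ[k] WC v) →ₗ[k] (∀ e, WC (src e) →ₗ[k] WC (tgt e)),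
        (∀ η e, DC η e = fC e ∘ₗ η (src e) - η (tgt e) ∘ₗ fC e) ∧
        Nonempty (((∀ e, W (src e) →ₗ[k] W (tgt e)) ⧸ LinearMap.range DM) ≃ₗ[k]
          ((∀ e, WC (src e) →ₗ[k] WC (tgt e)) ⧸ LinearMap.range DC))) ∧
      -- in particular, indecomposability passes from `M` to `C`
      ((∀ η : ∀ v, W v →ₗ[k] W v,
          (∀ e x, η (tgt e) (f e x) = f e (η (src e) x)) →
          (∀ v, η v ∘ₗ η v = η v) → (∀ v, η v = 0) ∨ (∀ v, η v = LinearMap.id)) →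
        (∀ η : ∀ v, WC v →ₗ[k] WC v,
          (∀ e x, η (tgt e) (fC e x) = fC e (η (src e) x)) →
          (∀ v, η v ∘ₗ η v = η v) → (∀ v, η v = 0) ∨ (∀ v, η v = LinearMap.id))) := by
  classical
  subst hα
  have hbij : Bijective (f α) := by
    have := isSimpleModule_iff_finrank_eq_one.mpr hs1
    have := isSimpleModule_iff_finrank_eq_one.mpr hq1
    exact LinearMap.bijective_of_ne_zero hfα
  obtain rfl : DM = repDiff (M := fun v => W v) f := LinearMap.ext fun η => funext (hDM η)
  obtain ⟨WC, fC, π, hπ⟩ := exists_killsVertex (fun v => W v) f hsink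
  refine ⟨WC, fC, π, hπ.comm, hπ.subsingleton, hπ.bijective,
    ⟨_, hπ.bijective_pushEnd_restrict hsink hbij huniq, fun a b c hc v => ?_, fun a b c hc v => ?_⟩,
    ⟨repDiff fC, fun _ _ => rfl, hπ.nonempty_quotient_range_repDiff_equiv hsink hbij huniq⟩,
    hπ.hasTrivialIdempotents hsink hbij huniq⟩
  · simp [show c.1 = a.1 + b.1 from funext hc]
  · exact (congrFun (congrArg hπ.pushEnd (funext hc)) v).trans (hπ.pushEnd_comp _ _ v)

/-- Let `s` be a sink of a finite acyclic quiver with a unique incoming arrow `α : q → s`,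
and let `M = (W, f)` be a representation with `W s ≅ k ≅ W q` and `f α ≠ 0`.  Then there is
an exact sequence `0 → E_s → M → C → 0` (realised by a morphism `π : M → C` which is
bijective away from `s`, with `C` vanishing at `s`), with `End(C) ≅ End(M)` and
`Ext¹(M, M) ≅ Ext¹(C, C)` (realised as cokernels of the maps `D`); in particular
indecomposability passes from `M` to `C`. -/
theorem stmt_16 {k V E : Type} [Field k] [Fintype V] [Fintype E]
    (src tgt : E → V) (ht : V → ℕ) (hacyc : ∀ e, ht (src e) < ht (tgt e))
    (s : V) (hsink : ∀ e, src e ≠ s)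
    (α : E) (hα : tgt α = s) (huniq : ∀ e, tgt e = s → e = α)
    (W : V → ModuleCat k) (hfd : ∀ v, FiniteDimensional k (W v))
    (f : ∀ e, W (src e) →ₗ[k] W (tgt e))
    (hs1 : Module.finrank k (W s) = 1)
    (hq1 : Module.finrank k (W (src α)) = 1)
    (hfα : f α ≠ 0)
    (DM : (∀ v, W v →ₗ[k] W v) →ₗ[k] (∀ e, W (src e) →ₗ[k] W (tgt e)))
    (hDM : ∀ η e, DM η e = f e ∘ₗ η (src e) - η (tgt e) ∘ₗ f e) :
    ∃ (WC : V → ModuleCat k) (fC : ∀ e, WC (src e) →ₗ[k] WC (tgt e))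
      (π : ∀ v, W v →ₗ[k] WC v),
      -- `π : M → C` is a morphism of representations, bijective away from `s`,
      -- with `C` vanishing at `s` (so `0 → E_s → M → C → 0` is exact)
      (∀ e x, π (tgt e) (f e x) = fC e (π (src e) x)) ∧
      Subsingleton (WC s) ∧
      (∀ v, v ≠ s → Function.Bijective (π v)) ∧
      -- `End(C) ≅ End(M)`
      (∃ Φ : {η : ∀ v, W v →ₗ[k] W v //
                ∀ e x, η (tgt e) (f e x) = f e (η (src e) x)} →
             {η : ∀ v, WC v →ₗ[k] WC v //
                ∀ e x, η (tgt e) (fC e x) = fC e (η (src e) x)},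
        Function.Bijective Φ ∧
        (∀ a b c : {η : ∀ v, W v →ₗ[k] W v //
            ∀ e x, η (tgt e) (f e x) = f e (η (src e) x)},
          (∀ v, c.1 v = a.1 v + b.1 v) → ∀ v, (Φ c).1 v = (Φ a).1 v + (Φ b).1 v) ∧
        (∀ a b c : {η : ∀ v, W v →ₗ[k] W v //
            ∀ e x, η (tgt e) (f e x) = f e (η (src e) x)},
          (∀ v, c.1 v = a.1 v ∘ₗ b.1 v) → ∀ v, (Φ c).1 v = (Φ a).1 v ∘ₗ (Φ b).1 v)) ∧
      -- `Ext¹(M,M) ≅ Ext¹(C,C)`, both realised as cokernels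
      (∃ DC : (∀ v, WC v →ₗ[k] WC v) →ₗ[k] (∀ e, WC (src e) →ₗ[k] WC (tgt e)),
        (∀ η e, DC η e = fC e ∘ₗ η (src e) - η (tgt e) ∘ₗ fC e) ∧
        Nonempty (((∀ e, W (src e) →ₗ[k] W (tgt e)) ⧸ LinearMap.range DM) ≃ₗ[k]
          ((∀ e, WC (src e) →ₗ[k] WC (tgt e)) ⧸ LinearMap.range DC))) ∧
      -- in particular, indecomposability passes from `M` to `C`
      ((∀ η : ∀ v, W v →ₗ[k] W v,
          (∀ e x, η (tgt e) (f e x) = f e (η (src e) x)) →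
          (∀ v, η v ∘ₗ η v = η v) → (∀ v, η v = 0) ∨ (∀ v, η v = LinearMap.id)) →
        (∀ η : ∀ v, WC v →ₗ[k] WC v,
          (∀ e x, η (tgt e) (fC e x) = fC e (η (src e) x)) →
          (∀ v, η v ∘ₗ η v = η v) → (∀ v, η v = 0) ∨ (∀ v, η v = LinearMap.id))) :=
  stmt_16_general src tgt s hsink α hα huniq W hfd f hs1 hq1 hfα DM hDM
end

section
/- Let K be a finite quiver and E a simple representation of K with Ext¹_K(E, E) = 0. Then E is isomorphic to a simple representation E_x concentrated at a single vertex x (with value k at x and 0 elsewhere). -/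
/-!
If some edge map of the simple representation `(W, f)` is nonzero, then
`η ↦ (η (tgt e) ∘ f e)ₑ` is injective on `∏ᵥ End(W v)`: the kernels of the components of any
`η` it kills form a subrepresentation; if it were `0`, every `η (tgt e)` would be injective and
`f = 0`, so it is everything and `η = 0`. Hence `dim ∏ᵥ End(W v) ≤ dim ∏ₑ Hom(W (src e), W (tgt e))`.
But `D` maps the former space onto the latter and kills the identity, so the inequality is
strict in the opposite direction. Thus all edge maps vanish, every family of subspaces is a
subrepresentation, and simplicity leaves a single line at a single vertex.
-/

open Module

namespace QuiverRep

variable {k V E : Type*} [Field k] {src tgt : E → V} {W : V → Type*}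
  [∀ v, AddCommGroup (W v)] [∀ v, Module k (W v)]

def postcompEdges (f : ∀ e, W (src e) →ₗ[k] W (tgt e)) :
    (∀ v, W v →ₗ[k] W v) →ₗ[k] ∀ e, W (src e) →ₗ[k] W (tgt e) :=
  LinearMap.pi fun e => LinearMap.lcomp k (W (tgt e)) (f e) ∘ₗ LinearMap.proj (tgt e)

lemma postcompEdges_injective_or_forall_eq_zero (f : ∀ e, W (src e) →ₗ[k] W (tgt e))
    (hsimple : ∀ U : ∀ v, Submodule k (W v),
      (∀ e, ∀ x ∈ U (src e), f e x ∈ U (tgt e)) → (∀ v, U v = ⊥) ∨ (∀ v, U v = ⊤)) :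
    Function.Injective (postcompEdges f) ∨ ∀ e, f e = 0 := by
  rw [or_iff_not_imp_left, injective_iff_map_eq_zero]
  push Not
  rintro ⟨η, hη, hη_ne⟩
  have hkill : ∀ e x, η (tgt e) (f e x) = 0 := fun e x =>
    LinearMap.congr_fun (congr_fun hη e) x
  rcases hsimple (fun v => LinearMap.ker (η v)) (fun e x _ => hkill e x) with hbot | htop
  · intro e
    ext x
    exact LinearMap.ker_eq_bot.mp (hbot (tgt e)) (by simpa using hkill e x)
  · exact absurd (funext fun v => LinearMap.ker_eq_top.mp (htop v)) hη_ne

lemma exists_finrank_eq_one_of_forall_eq_zero {f : ∀ e, W (src e) →ₗ[k] W (tgt e)}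
    (hf : ∀ e, f e = 0) (hne : ∃ v, ∃ x : W v, x ≠ 0)
    (hsimple : ∀ U : ∀ v, Submodule k (W v),
      (∀ e, ∀ x ∈ U (src e), f e x ∈ U (tgt e)) → (∀ v, U v = ⊥) ∨ (∀ v, U v = ⊤)) :
    ∃ x : V, finrank k (W x) = 1 ∧ ∀ v, v ≠ x → Subsingleton (W v) := by
  classical
  obtain ⟨v₀, x₀, hx₀⟩ := hne
  let U := Function.update (fun v => (⊥ : Submodule k (W v))) v₀ (k ∙ x₀)
  have hU : ∀ v, U v = ⊤ := by
    refine (hsimple U fun e x _ => by simp [hf]).resolve_left fun hbot => hx₀ ?_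
    have hmem : x₀ ∈ U v₀ := by simp [U, Submodule.mem_span_singleton_self x₀]
    simpa [hbot v₀] using hmem
  refine ⟨v₀, (finrank_eq_one_iff_of_nonzero x₀ hx₀).mpr (by simpa [U] using hU v₀),
    fun v hv => ?_⟩
  rw [← Submodule.subsingleton_iff k, ← subsingleton_iff_bot_eq_top]
  simpa [U, hv] using hU v

end QuiverRep

lemma LinearMap.not_injective_of_surjective_of_ker_ne_bot {K M N : Type*} [Field K]
    [AddCommGroup M] [Module K M] [AddCommGroup N] [Module K N]
    [FiniteDimensional K M] [FiniteDimensional K N] {D : M →ₗ[K] N} (hD : Function.Surjective D)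
    (hker : LinearMap.ker D ≠ ⊥) (Θ : M →ₗ[K] N) : ¬ Function.Injective Θ := fun hΘ =>
  hker <| LinearMap.ker_eq_bot.mpr <|
    (LinearMap.injective_iff_surjective_of_finrank_eq_finrank
      (le_antisymm (LinearMap.finrank_le_finrank_of_injective hΘ)
        (LinearMap.finrank_le_finrank_of_surjective hD))).mpr hD

/-- A simple representation `E = (W, f)` of a finite quiver with `Ext¹(E, E) = 0`
(expressed by surjectivity of the map `D` whose cokernel is `Ext¹`) is concentrated at a
single vertex, with value `k` there and `0` elsewhere. -/
theorem stmt_17 {k V E : Type} [Field k] [Fintype V] [Fintype E]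
    (src tgt : E → V)
    (W : V → ModuleCat k) (hfd : ∀ v, FiniteDimensional k (W v))
    (f : ∀ e, W (src e) →ₗ[k] W (tgt e))
    (hsimple : (∃ v, ∃ x : W v, x ≠ 0) ∧
      ∀ U : ∀ v, Submodule k (W v),
        (∀ e, ∀ x ∈ U (src e), f e x ∈ U (tgt e)) →
          (∀ v, U v = ⊥) ∨ (∀ v, U v = ⊤))
    (D : (∀ v, W v →ₗ[k] W v) →ₗ[k] (∀ e, W (src e) →ₗ[k] W (tgt e)))
    (hD : ∀ η e, D η e = f e ∘ₗ η (src e) - η (tgt e) ∘ₗ f e)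
    (hext : Function.Surjective D) :
    ∃ x : V, Module.finrank k (W x) = 1 ∧ ∀ v, v ≠ x → Subsingleton (W v) := by
  obtain ⟨hne, hsub⟩ := hsimple
  rcases QuiverRep.postcompEdges_injective_or_forall_eq_zero (W := fun v => W v) f hsub with
    hinj | hzero
  · have hid : (fun _ => LinearMap.id) ∈ LinearMap.ker D := by
      ext e x
      simp [hD]
    have hker : LinearMap.ker D ≠ ⊥ := fun hbot => by
      obtain ⟨v₀, x₀, hx₀⟩ := hne
      have hid0 := congr_fun ((Submodule.mem_bot k).mp (hbot ▸ hid)) v₀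
      exact hx₀ (LinearMap.congr_fun hid0 x₀)
    exact absurd hinj (LinearMap.not_injective_of_surjective_of_ker_ne_bot hext hker _)
  · exact QuiverRep.exists_finrank_eq_one_of_forall_eq_zero (W := fun v => W v) hzero hne hsub
end
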